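/- arXiv:math/0411648 — 2 statements merged into one kernel-verified Lean document; each statement's English description precedes it below -/
import Mathlib

section
/- Let n ≥ 2. The function g : ℝⁿ → ℝ defined by g(z) = (|z| · log|z|)⁻¹ for |z| ≥ 2 and g(z) = 0 for |z| < 2 belongs to L^p(ℝⁿ) for every p ≥ n, but ∫_{ℝⁿ} g(z) · |z|^{1-n} 𝟙_{|z|≥2} dz = +∞. -/
/-!
In polar coordinates Lebesgue measure on `ℝⁿ` is `r ^ (n - 1) dr` times a finite measure on the
sphere, so both claims reduce to integrals over `(2, ∞)`. For `p ≥ n` the radial weight of `|g| ^ p`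
is at most `r⁻¹ (log r) ^ (-p)`, the derivative of `(log r) ^ (1 - p) / (1 - p)`, which is
integrable since `p > 1`. The weight `|z| ^ (1 - n)` exactly cancels the Jacobian, leaving
`(r log r)⁻¹ = (log (log r))'`, which is not integrable.
-/

open MeasureTheory Set Filter
open scoped Topology

lemma integrableOn_Ioi_inv_mul_log_rpow_neg {a s : ℝ} (ha : 1 < a) (hs : 1 < s) :
    IntegrableOn (fun r : ℝ => r⁻¹ * Real.log r ^ (-s)) (Ioi a) := by
  have hderiv : ∀ x ∈ Ici a, HasDerivAt (fun r => (1 - s)⁻¹ * Real.log r ^ (1 - s))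
      (x⁻¹ * Real.log x ^ (-s)) x := by
    intro x hx
    have hlog : 0 < Real.log x := Real.log_pos (ha.trans_le hx)
    have := ((Real.hasDerivAt_rpow_const (p := 1 - s) (Or.inl hlog.ne')).comp x
      (Real.hasDerivAt_log (by linarith [mem_Ici.1 hx]))).const_mul (1 - s)⁻¹
    refine this.congr_deriv ?_
    rw [sub_sub_cancel_left]
    field_simp [(by linarith : (1 : ℝ) - s ≠ 0)]
  have hlim : Tendsto (fun r => (1 - s)⁻¹ * Real.log r ^ (1 - s)) atTop (𝓝 ((1 - s)⁻¹ * 0)) := by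
    refine Tendsto.const_mul _ ?_
    simpa [Function.comp_def, neg_sub] using
      (tendsto_rpow_neg_atTop (by linarith : 0 < s - 1)).comp Real.tendsto_log_atTop
  refine integrableOn_Ioi_deriv_of_nonneg' hderiv (fun x hx => ?_) hlim
  have hx : 1 < x := ha.trans hx
  exact mul_nonneg (inv_nonneg.2 (by linarith)) (Real.rpow_nonneg (Real.log_nonneg hx.le) _)

lemma not_integrableOn_Ioi_inv_mul_log (a : ℝ) :
    ¬ IntegrableOn (fun r : ℝ => (r * Real.log r)⁻¹) (Ioi a) := by
  have hderiv : ∀ᶠ x in atTop,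
      HasDerivAt (fun r => Real.log (Real.log r)) (x * Real.log x)⁻¹ x := by
    filter_upwards [eventually_gt_atTop 1] with x hx
    have := (Real.hasDerivAt_log (Real.log_pos hx).ne').comp x
      (Real.hasDerivAt_log (by linarith))
    refine this.congr_deriv ?_
    rw [mul_inv, mul_comm]
  exact not_integrableOn_of_tendsto_norm_atTop_of_deriv_isBigO_filter atTop (Ioi_mem_atTop a)
    (hderiv.mono fun x hx => hx.differentiableAt)
    (tendsto_norm_atTop_atTop.comp (Real.tendsto_log_atTop.comp Real.tendsto_log_atTop))
    (EventuallyEq.isBigO (hderiv.mono fun x hx => hx.deriv))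

lemma pow_mul_inv_mul_log_rpow_le {n : ℕ} {p y : ℝ} (hn : 1 ≤ n) (hnp : n ≤ p) (hy : 1 < y) :
    y ^ (n - 1) * ((y * Real.log y)⁻¹) ^ p ≤ y⁻¹ * Real.log y ^ (-p) := by
  have hy0 : 0 < y := by linarith
  have hlog : 0 < Real.log y := Real.log_pos hy
  rw [Real.inv_rpow (by positivity), Real.mul_rpow hy0.le hlog.le, mul_inv, ← mul_assoc,
    ← Real.rpow_neg hlog.le, ← Real.rpow_neg hy0.le, ← Real.rpow_natCast,
    ← Real.rpow_add hy0, ← Real.rpow_neg_one y, Nat.cast_sub hn, Nat.cast_one]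
  gcongr
  · exact hy.le
  · linarith

section Radial

variable {E F : Type*} [NormedAddCommGroup E] [NormedSpace ℝ E] [MeasurableSpace E] [BorelSpace E]
  [FiniteDimensional ℝ E] [Nontrivial E] [NormedAddCommGroup F] [NormedSpace ℝ F]
  (μ : Measure E) [μ.IsAddHaarMeasure]

lemma integrableOn_le_norm_fun_norm_addHaar {f : ℝ → F} {r : ℝ} (hr : 0 < r) :
    IntegrableOn (fun x : E => f ‖x‖) {x | r ≤ ‖x‖} μ ↔
      IntegrableOn (fun y ↦ y ^ (Module.finrank ℝ E - 1) • f y) (Ici r) := by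
  calc
    _ ↔ Integrable (fun x ↦ (Ici r).indicator f ‖x‖) μ :=
      (integrable_indicator_iff (measurableSet_le measurable_const measurable_norm)).symm
    _ ↔ IntegrableOn ((Ici r).indicator fun y ↦ y ^ (Module.finrank ℝ E - 1) • f y) (Ioi 0) := by
      rw [integrable_fun_norm_addHaar μ, indicator_smul]
    _ ↔ _ := by
      rw [IntegrableOn, integrable_indicator_iff measurableSet_Ici, IntegrableOn,
        Measure.restrict_restrict measurableSet_Ici, inter_eq_left.2 (Ici_subset_Ioi.2 hr),
        IntegrableOn]

lemma memLp_indicator_inv_mul_log {p : ℝ} (hp : 1 < p) (hdp : (Module.finrank ℝ E : ℝ) ≤ p) :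
    MemLp ({x : E | 2 ≤ ‖x‖}.indicator fun x => (‖x‖ * Real.log ‖x‖)⁻¹) (ENNReal.ofReal p) μ := by
  rw [memLp_indicator_iff_restrict (measurableSet_le measurable_const measurable_norm),
    ← integrable_norm_rpow_iff (by fun_prop) (by simp; linarith) ENNReal.ofReal_ne_top,
    ENNReal.toReal_ofReal (by linarith), ← IntegrableOn,
    integrableOn_le_norm_fun_norm_addHaar (f := fun r => ‖(r * Real.log r)⁻¹‖ ^ p) μ two_pos,
    integrableOn_Ici_iff_integrableOn_Ioi]
  refine (integrableOn_Ioi_inv_mul_log_rpow_neg one_lt_two hp).mono' (by fun_prop) ?_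
  refine ae_restrict_of_forall_mem measurableSet_Ioi fun y (hy : 2 < y) => ?_
  have hpos : 0 < y * Real.log y := mul_pos (by linarith) (Real.log_pos (by linarith))
  rw [smul_eq_mul, Real.norm_of_nonneg (by positivity), Real.norm_of_nonneg (by positivity)]
  exact pow_mul_inv_mul_log_rpow_le Module.finrank_pos hdp (by linarith)

lemma setLIntegral_inv_mul_log_mul_rpow_eq_top :
    ∫⁻ x in {x : E | 2 ≤ ‖x‖},
      ENNReal.ofReal ((‖x‖ * Real.log ‖x‖)⁻¹ * ‖x‖ ^ (1 - (Module.finrank ℝ E : ℝ))) ∂μ = ⊤ := by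
  by_contra hfin
  have hS : MeasurableSet {x : E | 2 ≤ ‖x‖} := measurableSet_le measurable_const measurable_norm
  have hint : IntegrableOn (fun x : E =>
      (‖x‖ * Real.log ‖x‖)⁻¹ * ‖x‖ ^ (1 - (Module.finrank ℝ E : ℝ))) {x | 2 ≤ ‖x‖} μ := by
    refine (lintegral_ofReal_ne_top_iff_integrable (by fun_prop) ?_).1 hfin
    refine ae_restrict_of_forall_mem hS fun x (hx : 2 ≤ ‖x‖) => ?_
    have := Real.log_nonneg (by linarith : (1 : ℝ) ≤ ‖x‖)
    positivity
  rw [integrableOn_le_norm_fun_norm_addHaar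
    (f := fun r => (r * Real.log r)⁻¹ * r ^ (1 - (Module.finrank ℝ E : ℝ))) μ two_pos] at hint
  refine not_integrableOn_Ioi_inv_mul_log 2
    ((hint.mono_set Ioi_subset_Ici_self).congr_fun (fun y (hy : 2 < y) => ?_) measurableSet_Ioi)
  dsimp only
  rw [smul_eq_mul, mul_left_comm, ← Real.rpow_natCast, ← Real.rpow_add (by linarith),
    Nat.cast_sub Module.finrank_pos]
  simp

end Radial

theorem log_counterexample_pairing (n : ℕ) (hn : 2 ≤ n)
    (g : EuclideanSpace ℝ (Fin n) → ℝ)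
    (hg : ∀ z, g z = if 2 ≤ ‖z‖ then (‖z‖ * Real.log ‖z‖)⁻¹ else 0) :
    (∀ p : ℝ, (n : ℝ) ≤ p → MemLp g (ENNReal.ofReal p) volume) ∧
    (∫⁻ z in {z : EuclideanSpace ℝ (Fin n) | 2 ≤ ‖z‖},
        ENNReal.ofReal (g z * ‖z‖ ^ ((1:ℝ) - n))) = ⊤ := by
  have hdim : Module.finrank ℝ (EuclideanSpace ℝ (Fin n)) = n := finrank_euclideanSpace_fin
  have : Nontrivial (EuclideanSpace ℝ (Fin n)) :=
    Module.nontrivial_of_finrank_pos (R := ℝ) (by omega)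
  refine ⟨fun p hp => ?_, ?_⟩
  · have hn' : (2 : ℝ) ≤ n := by exact_mod_cast hn
    have hg_ind : g = {z | 2 ≤ ‖z‖}.indicator fun z => (‖z‖ * Real.log ‖z‖)⁻¹ := funext hg
    rw [hg_ind]
    exact memLp_indicator_inv_mul_log volume (by linarith) (by rwa [hdim])
  · calc _ = ∫⁻ z in {z : EuclideanSpace ℝ (Fin n) | 2 ≤ ‖z‖},
          ENNReal.ofReal ((‖z‖ * Real.log ‖z‖)⁻¹ * ‖z‖ ^ ((1:ℝ) - n)) :=
          setLIntegral_congr_fun (measurableSet_le measurable_const measurable_norm)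
            fun z (hz : 2 ≤ ‖z‖) => by rw [hg, if_pos hz]
      _ = ⊤ := by
        rw [← setLIntegral_inv_mul_log_mul_rpow_eq_top
          (volume : Measure (EuclideanSpace ℝ (Fin n))), hdim]
end

section
/- Let z, z' ∈ ℝⁿ with |z'| ≥ 2|z| and z' ≠ 0. Then | |z - z'| - |z'| + z·(z'/|z'|) | ≤ 2|z|²/|z'|. -/
/-!
Write `t = ⟪z, z'⟫ / ‖z'‖` and `u = ‖z'‖ - t` for the component of `z' - z` along `z'`. Pythagoras
gives `‖z - z'‖² = u² + (‖z‖² - t²)`, so the quantity to bound is `√(u² + s) - u` with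
`0 ≤ s ≤ ‖z‖²`, which lies between `0` and `s / (2u)`. Since `|t| ≤ ‖z‖ ≤ ‖z'‖ / 2`, we have
`2u ≥ ‖z'‖`, and in fact the sharper bound `‖z‖² / ‖z'‖` holds.
-/

open RealInnerProductSpace

lemma sub_nonneg_and_two_mul_mul_sub_le_of_sq_eq {a u s : ℝ} (ha : 0 ≤ a) (hu : 0 ≤ u)
    (hs : 0 ≤ s) (h : a ^ 2 = u ^ 2 + s) : 0 ≤ a - u ∧ 2 * u * (a - u) ≤ s := by
  have hua : u ≤ a := (pow_le_pow_iff_left₀ hu ha two_ne_zero).mp (by linarith)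
  refine ⟨sub_nonneg.mpr hua, ?_⟩
  nlinarith

section InnerProductSpace

variable {E : Type*} [NormedAddCommGroup E] [InnerProductSpace ℝ E]

lemma abs_inner_div_norm_le (x y : E) : |⟪x, y⟫ / ‖y‖| ≤ ‖x‖ := by
  rw [abs_div, abs_norm]
  exact div_le_of_le_mul₀ (norm_nonneg y) (norm_nonneg x) (abs_real_inner_le_norm x y)

lemma norm_sub_sq_eq_sq_add_sq_sub {x y : E} (hy : y ≠ 0) :
    ‖x - y‖ ^ 2 = (‖y‖ - ⟪x, y⟫ / ‖y‖) ^ 2 + (‖x‖ ^ 2 - (⟪x, y⟫ / ‖y‖) ^ 2) := by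
  have hy' : ‖y‖ ≠ 0 := norm_ne_zero_iff.mpr hy
  rw [norm_sub_sq_real]
  field_simp
  ring

lemma abs_norm_sub_sub_norm_add_inner_div_le {x y : E} (h : 2 * ‖x‖ ≤ ‖y‖) (hy : y ≠ 0) :
    |‖x - y‖ - ‖y‖ + ⟪x, y⟫ / ‖y‖| ≤ ‖x‖ ^ 2 / ‖y‖ := by
  set t := ⟪x, y⟫ / ‖y‖
  have ht : |t| ≤ ‖x‖ := abs_inner_div_norm_le x y
  have hu : ‖y‖ ≤ 2 * (‖y‖ - t) := by linarith [le_abs_self t]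
  have hs : 0 ≤ ‖x‖ ^ 2 - t ^ 2 := sub_nonneg.mpr (sq_le_sq' (abs_le.mp ht).1 (abs_le.mp ht).2)
  obtain ⟨hnonneg, hle⟩ := sub_nonneg_and_two_mul_mul_sub_le_of_sq_eq (norm_nonneg (x - y))
    (by linarith [norm_nonneg y]) hs (norm_sub_sq_eq_sq_add_sq_sub hy)
  rw [show ‖x - y‖ - ‖y‖ + t = ‖x - y‖ - (‖y‖ - t) by ring, abs_of_nonneg hnonneg,
    le_div_iff₀ (norm_pos_iff.mpr hy)]
  calc (‖x - y‖ - (‖y‖ - t)) * ‖y‖ ≤ 2 * (‖y‖ - t) * (‖x - y‖ - (‖y‖ - t)) := by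
        rw [mul_comm]; exact mul_le_mul_of_nonneg_right hu hnonneg
    _ ≤ ‖x‖ ^ 2 := by linarith [sq_nonneg t]

end InnerProductSpace

theorem distance_expansion (n : ℕ) (z z' : EuclideanSpace ℝ (Fin n))
    (h : 2 * ‖z‖ ≤ ‖z'‖) (hz' : z' ≠ 0) :
    |‖z - z'‖ - ‖z'‖ + (inner ℝ z z' : ℝ) / ‖z'‖| ≤ 2 * ‖z‖ ^ 2 / ‖z'‖ := by
  refine (abs_norm_sub_sub_norm_add_inner_div_le h hz').trans ?_
  gcongr
  linarith [sq_nonneg ‖z‖]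
end
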